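/- Let c₁ ≠ c₂ be real numbers and let (T_j)_{j≥1} be positive integers satisfying T_{j+1} / (∑_{i=1}^{j} T_i) → ∞ as j → ∞. Let a : ℕ → ℝ be the sequence whose j-th consecutive block has length T_j and constant value c₁ for j odd and c₂ for j even. Then the Birkhoff averages B_n satisfy liminf B_n = min(c₁, c₂) and limsup B_n = max(c₁, c₂), and for every k ≥ 0 the Hölder means satisfy liminf_n H^{(k)}_n = min(c₁, c₂) and limsup_n H^{(k)}_n = max(c₁, c₂) (type B2). In particular this applies when T_{j+1} ≥ K e^{T_j} for some K > 0 with T_j → ∞, as for the observable values along orbits of the non-hyperbolic modification of Bowen's example. -/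

import Mathlib

open Filter Topology

/-- Birkhoff averages: `birk a n = (1/n) * ∑_{i=0}^{n-1} a i` (junk value `0` at `n = 0`). -/
noncomputable def birk (a : ℕ → ℝ) (n : ℕ) : ℝ := (∑ i ∈ Finset.range n, a i) / n

/-- Iterated Hölder means of a sequence `b` (indexed from 1):
`holderMeans b 0 n = b n` and `holderMeans b (k+1) n = (1/n) * ∑_{i=1}^n holderMeans b k i`. -/
noncomputable def holderMeans (b : ℕ → ℝ) : ℕ → ℕ → ℝ
  | 0, n => b n
  | k+1, n => (∑ i ∈ Finset.Icc 1 n, holderMeans b k i) / n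


/-! Let `S j` be the end of the `j`-th block. If `a` equals `c` on a block `[s, e)` and takes all
its values in `[L, U]`, then for `s < n ≤ e` every Hölder mean satisfies
`|H^(k)_n - c| ≤ 3^k (U - L) √(s/n)`: a bound of the form `C √(s/i)` on the terms survives one
Cesàro averaging with `C` replaced by `U - L + 2C`, because `∑_{s<i≤n} √(s/i) ≤ 2 √(s n)`.
The growth condition gives `S (j-1) / S j → 0`, so along the ends of the odd (even) blocks every
`H^(k)` tends to `c₁` (`c₂`), while all means stay in `[min c₁ c₂, max c₁ c₂]`. -/

open Finset
open scoped BigOperators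

theorem sum_Icc_inv_sqrt_le (n : ℕ) : ∑ i ∈ Icc 1 n, (√(i : ℝ))⁻¹ ≤ 2 * √(n : ℝ) := by
  induction n with
  | zero => simp
  | succ n ih =>
    rw [sum_Icc_succ_top (by omega), Nat.cast_succ]
    have hpos : 0 < √((n : ℝ) + 1) := Real.sqrt_pos.2 (by positivity)
    have hsq : √((n : ℝ) + 1) ^ 2 = n + 1 := Real.sq_sqrt (by positivity)
    have hsq' : √(n : ℝ) ^ 2 = n := Real.sq_sqrt (by positivity)
    have hmono : √(n : ℝ) ≤ √((n : ℝ) + 1) := Real.sqrt_le_sqrt (by linarith)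
    -- after clearing the denominator this is AM-GM: `√n √(n+1) ≤ n + 1/2`
    have hstep : (√((n : ℝ) + 1))⁻¹ ≤ 2 * (√((n : ℝ) + 1) - √(n : ℝ)) := by
      rw [inv_le_iff_one_le_mul₀' hpos]
      nlinarith [Real.sqrt_nonneg (n : ℝ)]
    linarith

theorem abs_mean_sub_le_of_sqrt_bound {g : ℕ → ℝ} {c C D : ℝ} {s n : ℕ} (hD : 0 ≤ D)
    (hC : 0 ≤ C) (hsn : s < n) (hg_le : ∀ i ∈ Icc 1 s, |g i - c| ≤ D)
    (hg_sqrt : ∀ i ∈ Ioc s n, |g i - c| ≤ C * √((s : ℝ) / i)) :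
    |(∑ i ∈ Icc 1 n, g i) / n - c| ≤ (D + 2 * C) * √((s : ℝ) / n) := by
  have hn : (0 : ℝ) < n := by exact_mod_cast (Nat.zero_le s).trans_lt hsn
  have hsplit : (∑ i ∈ Icc 1 n, g i) / n - c
      = (∑ i ∈ Icc 1 s, (g i - c) + ∑ i ∈ Ioc s n, (g i - c)) / n := by
    rw [show Icc 1 s = Ioc 0 s from rfl, sum_Ioc_consecutive _ (Nat.zero_le s) hsn.le,
      sum_sub_distrib, sum_const, Nat.card_Ioc, Nat.sub_zero, nsmul_eq_mul, sub_div,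
      mul_div_cancel_left₀ _ hn.ne']
    rfl
  have hhead : |∑ i ∈ Icc 1 s, (g i - c)| ≤ D * s := by
    refine (abs_sum_le_sum_abs _ _).trans ((sum_le_card_nsmul _ _ D hg_le).trans_eq ?_)
    simp [mul_comm]
  have htail : |∑ i ∈ Ioc s n, (g i - c)| ≤ C * √(s : ℝ) * (2 * √(n : ℝ)) := by
    calc |∑ i ∈ Ioc s n, (g i - c)| ≤ ∑ i ∈ Ioc s n, C * √((s : ℝ) / i) :=
          (abs_sum_le_sum_abs _ _).trans (sum_le_sum hg_sqrt)
      _ = C * √(s : ℝ) * ∑ i ∈ Ioc s n, (√(i : ℝ))⁻¹ := by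
          simp_rw [mul_sum, Real.sqrt_div' _ (Nat.cast_nonneg _), div_eq_mul_inv, mul_assoc]
      _ ≤ C * √(s : ℝ) * ∑ i ∈ Icc 1 n, (√(i : ℝ))⁻¹ := by
          gcongr
          intro i hi; simp only [mem_Ioc, mem_Icc] at hi ⊢; omega
      _ ≤ C * √(s : ℝ) * (2 * √(n : ℝ)) := by gcongr; exact sum_Icc_inv_sqrt_le n
  have hratio : (s : ℝ) / n ≤ √((s : ℝ) / n) :=
    Real.le_sqrt_self_iff.2 ((div_le_one hn).2 (by exact_mod_cast hsn.le))
  have hsqrt : √(s : ℝ) * √(n : ℝ) / n = √((s : ℝ) / n) := by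
    rw [Real.sqrt_div' _ (Nat.cast_nonneg _), mul_div_assoc, Real.sqrt_div_self', mul_one_div]
  calc |(∑ i ∈ Icc 1 n, g i) / n - c|
      ≤ (D * s + C * √(s : ℝ) * (2 * √(n : ℝ))) / n := by
        rw [hsplit, abs_div, abs_of_pos hn]
        gcongr
        exact (abs_add_le _ _).trans (add_le_add hhead htail)
    _ = D * ((s : ℝ) / n) + 2 * C * √((s : ℝ) / n) := by rw [← hsqrt]; ring
    _ ≤ (D + 2 * C) * √((s : ℝ) / n) := by nlinarith

theorem holderMeans_zero (b : ℕ → ℝ) : holderMeans b 0 = b := rfl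

theorem birk_eq_expect (a : ℕ → ℝ) (n : ℕ) : birk a n = 𝔼 i ∈ range n, a i := by
  rw [expect_eq_sum_div_card, card_range]; rfl

theorem holderMeans_succ_eq_expect (b : ℕ → ℝ) (k n : ℕ) :
    holderMeans b (k + 1) n = 𝔼 i ∈ Icc 1 n, holderMeans b k i := by
  rw [expect_eq_sum_div_card, Nat.card_Icc, Nat.add_sub_cancel]; rfl

theorem birk_eq_sum_Icc_div (a : ℕ → ℝ) (n : ℕ) :
    birk a n = (∑ i ∈ Icc 1 n, a (i - 1)) / n := by
  rw [birk, ← Ico_add_one_right_eq_Icc, ← zero_add 1, ← sum_Ico_add', range_eq_Ico]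
  rfl

section Bounds

variable {L U : ℝ}

theorem birk_mem_Icc {a : ℕ → ℝ} (ha : ∀ i, a i ∈ Set.Icc L U) {n : ℕ} (hn : 1 ≤ n) :
    birk a n ∈ Set.Icc L U := by
  have hne : (range n).Nonempty := nonempty_range_iff.2 (by omega)
  rw [birk_eq_expect]
  exact ⟨le_expect hne fun i _ => (ha i).1, expect_le hne fun i _ => (ha i).2⟩

theorem holderMeans_mem_Icc {b : ℕ → ℝ} (hb : ∀ n, 1 ≤ n → b n ∈ Set.Icc L U) (k : ℕ) {n : ℕ}
    (hn : 1 ≤ n) : holderMeans b k n ∈ Set.Icc L U := by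
  induction k generalizing n with
  | zero => exact hb n hn
  | succ k ih =>
    have hne : (Icc 1 n).Nonempty := nonempty_Icc.2 hn
    have hmem : ∀ i ∈ Icc 1 n, holderMeans b k i ∈ Set.Icc L U := fun i hi => ih (mem_Icc.1 hi).1
    rw [holderMeans_succ_eq_expect]
    exact ⟨le_expect hne fun i hi => (hmem i hi).1, expect_le hne fun i hi => (hmem i hi).2⟩

theorem abs_holderMeans_birk_sub_le {a : ℕ → ℝ} {c : ℝ} {s e : ℕ}
    (ha : ∀ i, a i ∈ Set.Icc L U) (hc : c ∈ Set.Icc L U) (hblock : ∀ i ∈ Ico s e, a i = c)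
    (k : ℕ) {n : ℕ} (hsn : s < n) (hne : n ≤ e) :
    |holderMeans (birk a) k n - c| ≤ 3 ^ k * (U - L) * √((s : ℝ) / n) := by
  have hLU : 0 ≤ U - L := sub_nonneg.2 (hc.1.trans hc.2)
  induction k generalizing n with
  | zero =>
    rw [holderMeans_zero, birk_eq_sum_Icc_div, pow_zero, one_mul, ← add_zero (U - L),
      ← mul_zero 2]
    refine abs_mean_sub_le_of_sqrt_bound hLU le_rfl hsn ?_ ?_
    · intro i _
      exact Real.dist_le_of_mem_Icc (ha _) hc
    · intro i hi
      rw [mem_Ioc] at hi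
      rw [hblock (i - 1) (mem_Ico.2 ⟨by omega, by omega⟩), sub_self, abs_zero, zero_mul]
  | succ k ih =>
    refine (abs_mean_sub_le_of_sqrt_bound (C := 3 ^ k * (U - L)) hLU (by positivity) hsn
      ?_ ?_).trans ?_
    · intro i hi
      exact Real.dist_le_of_mem_Icc (holderMeans_mem_Icc (fun _ => birk_mem_Icc ha) k
        (mem_Icc.1 hi).1) hc
    · intro i hi
      rw [mem_Ioc] at hi
      exact ih hi.1 (hi.2.trans hne)
    · have h3k : (1 : ℝ) ≤ 3 ^ k := one_le_pow₀ (by norm_num)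
      gcongr
      rw [pow_succ]
      nlinarith

end Bounds

theorem tendsto_holderMeans_birk_of_blocks {ι : Type*} {l : Filter ι} {a : ℕ → ℝ} {L U c : ℝ}
    {s e : ι → ℕ} (ha : ∀ i, a i ∈ Set.Icc L U) (hc : c ∈ Set.Icc L U) (hse : ∀ m, s m < e m)
    (hblock : ∀ m, ∀ i ∈ Ico (s m) (e m), a i = c)
    (hratio : Tendsto (fun m => (s m : ℝ) / e m) l (𝓝 0)) (k : ℕ) :
    Tendsto (fun m => holderMeans (birk a) k (e m)) l (𝓝 c) := by
  have hbound : Tendsto (fun m => 3 ^ k * (U - L) * √((s m : ℝ) / e m)) l (𝓝 0) := by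
    simpa using ((Real.continuous_sqrt.tendsto 0).comp hratio).const_mul (3 ^ k * (U - L))
  refine tendsto_iff_norm_sub_tendsto_zero.2
    (squeeze_zero (fun _ => norm_nonneg _) (fun m => ?_) hbound)
  exact abs_holderMeans_birk_sub_le ha hc (hblock m) k (hse m) le_rfl

section LimsupLiminf

variable {α β γ : Type*} [ConditionallyCompleteLinearOrder α] [TopologicalSpace α]
  [OrderTopology α] {f : β → α} {l : Filter β} {φ : γ → β} {l' : Filter γ} [l'.NeBot]

theorem limsup_eq_of_tendsto_comp [NoMinOrder α] {u : α} (hf : ∀ᶠ x in l, f x ≤ u)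
    (hφ : Tendsto φ l' l) (hfφ : Tendsto (f ∘ φ) l' (𝓝 u)) : limsup f l = u := by
  have hfreq : ∀ y < u, ∃ᶠ x in l, y < f x := fun y hy =>
    hφ.frequently (hfφ.eventually (lt_mem_nhds hy)).frequently
  obtain ⟨y, hy⟩ := exists_lt u
  have hcobdd : l.IsCoboundedUnder (· ≤ ·) f :=
    IsCoboundedUnder.of_frequently_ge ((hfreq y hy).mono fun _ => le_of_lt)
  exact le_antisymm (limsup_le_of_le hcobdd hf) ((le_limsup_iff hcobdd ⟨u, hf⟩).2 hfreq)

theorem liminf_eq_of_tendsto_comp [NoMaxOrder α] {u : α} (hf : ∀ᶠ x in l, u ≤ f x)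
    (hφ : Tendsto φ l' l) (hfφ : Tendsto (f ∘ φ) l' (𝓝 u)) : liminf f l = u :=
  limsup_eq_of_tendsto_comp (α := αᵒᵈ) hf hφ hfφ

theorem liminf_limsup_eq_of_tendsto_comp [NoMinOrder α] [NoMaxOrder α] {c₁ c₂ : α}
    {φ₁ φ₂ : γ → β} (hf : ∀ᶠ x in l, f x ∈ Set.Icc (min c₁ c₂) (max c₁ c₂))
    (hφ₁ : Tendsto φ₁ l' l) (hfφ₁ : Tendsto (f ∘ φ₁) l' (𝓝 c₁))
    (hφ₂ : Tendsto φ₂ l' l) (hfφ₂ : Tendsto (f ∘ φ₂) l' (𝓝 c₂)) :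
    liminf f l = min c₁ c₂ ∧ limsup f l = max c₁ c₂ := by
  have hlow : ∀ᶠ x in l, min c₁ c₂ ≤ f x := hf.mono fun _ hx => hx.1
  have hup : ∀ᶠ x in l, f x ≤ max c₁ c₂ := hf.mono fun _ hx => hx.2
  rcases le_total c₁ c₂ with h | h
  · rw [min_eq_left h, max_eq_right h] at *
    exact ⟨liminf_eq_of_tendsto_comp hlow hφ₁ hfφ₁, limsup_eq_of_tendsto_comp hup hφ₂ hfφ₂⟩
  · rw [min_eq_right h, max_eq_left h] at *
    exact ⟨liminf_eq_of_tendsto_comp hlow hφ₂ hfφ₂, limsup_eq_of_tendsto_comp hup hφ₁ hfφ₁⟩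

end LimsupLiminf

theorem exists_mem_Ico_of_strictMono {S : ℕ → ℕ} (hS : StrictMono S) {n : ℕ} (hn : S 0 ≤ n) :
    ∃ j, n ∈ Ico (S j) (S (j + 1)) := by
  have hcover := iUnion_Ico_map_succ_eq_Ici (fun j => hS.monotone (Nat.zero_le j))
    hS.not_bddAbove_range_of_wellFoundedLT
  obtain ⟨j, hj⟩ := Set.mem_iUnion.1 (hcover.symm ▸ Set.mem_Ici.2 hn :
    n ∈ ⋃ j, Set.Ico (S j) (S (Order.succ j)))
  exact ⟨j, by simpa [Order.succ_eq_add_one] using hj⟩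

theorem tendsto_div_add_nhds_zero {ι : Type*} {l : Filter ι} {x y : ι → ℝ} (hx : ∀ i, 0 ≤ x i)
    (hy : ∀ i, 0 ≤ y i) (hxy : Tendsto (fun i => y i / x i) l atTop) :
    Tendsto (fun i => x i / (x i + y i)) l (𝓝 0) := by
  refine squeeze_zero' (.of_forall fun i => div_nonneg (hx i) (add_nonneg (hx i) (hy i))) ?_
    hxy.inv_tendsto_atTop
  filter_upwards [hxy.eventually_gt_atTop 0] with i hi
  have hyi : 0 < y i := lt_of_le_of_ne (hy i) fun h => by simp [← h] at hi
  rw [Pi.inv_apply, inv_div]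
  exact div_le_div_of_nonneg_left (hx i) hyi (le_add_of_nonneg_left (hx i))

theorem modified_bowen_type_B2_general (c₁ c₂ : ℝ)
    (T : ℕ → ℕ) (hTpos : ∀ j : ℕ, 1 ≤ j → 1 ≤ T j)
    (hgrow : Tendsto (fun j : ℕ => (T (j + 1) : ℝ) / ∑ i ∈ Finset.Icc 1 j, (T i : ℝ))
      atTop atTop)
    (a : ℕ → ℝ)
    (ha : ∀ j : ℕ, 1 ≤ j → ∀ n : ℕ,
      (∑ i ∈ Finset.Icc 1 (j - 1), T i) ≤ n → n < ∑ i ∈ Finset.Icc 1 j, T i →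
      a n = if j % 2 = 1 then c₁ else c₂) :
    liminf (birk a) atTop = min c₁ c₂ ∧ limsup (birk a) atTop = max c₁ c₂ ∧
    ∀ k : ℕ, liminf (fun n : ℕ => holderMeans (birk a) k n) atTop = min c₁ c₂ ∧
      limsup (fun n : ℕ => holderMeans (birk a) k n) atTop = max c₁ c₂ := by
  set S : ℕ → ℕ := fun j => ∑ i ∈ Icc 1 j, T i
  have hS_succ (j : ℕ) : S (j + 1) = S j + T (j + 1) := sum_Icc_succ_top (by omega) T
  have hS : StrictMono S := strictMono_nat_of_lt_succ fun j => by
    have := hTpos (j + 1) (by omega); have := hS_succ j; omega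
  have hblock (j : ℕ) : ∀ i ∈ Ico (S j) (S (j + 1)), a i = if (j + 1) % 2 = 1 then c₁ else c₂ :=
    fun i hi => ha (j + 1) (by omega) i (mem_Ico.1 hi).1 (mem_Ico.1 hi).2
  have hc₁ : c₁ ∈ Set.Icc (min c₁ c₂) (max c₁ c₂) := ⟨min_le_left _ _, le_max_left _ _⟩
  have hc₂ : c₂ ∈ Set.Icc (min c₁ c₂) (max c₁ c₂) := ⟨min_le_right _ _, le_max_right _ _⟩
  have ha_mem (i : ℕ) : a i ∈ Set.Icc (min c₁ c₂) (max c₁ c₂) := by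
    obtain ⟨j, hj⟩ := exists_mem_Ico_of_strictMono hS (Nat.zero_le i)
    rw [hblock j i hj]
    split_ifs <;> assumption
  have hratio : Tendsto (fun j => (S j : ℝ) / S (j + 1)) atTop (𝓝 0) := by
    simpa [hS_succ, S] using tendsto_div_add_nhds_zero (fun j => Nat.cast_nonneg (S j))
      (fun j => Nat.cast_nonneg (T (j + 1))) (by simpa [S] using hgrow)
  have h_even : StrictMono fun m => 2 * m := strictMono_nat_of_lt_succ fun m => by omega
  have h_odd : StrictMono fun m => 2 * m + 1 := strictMono_nat_of_lt_succ fun m => by omega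
  have hmeans (k : ℕ) := liminf_limsup_eq_of_tendsto_comp
    ((eventually_ge_atTop 1).mono fun n => holderMeans_mem_Icc (fun _ => birk_mem_Icc ha_mem) k)
    (hS.comp h_odd).tendsto_atTop
    (tendsto_holderMeans_birk_of_blocks ha_mem hc₁ (fun m => hS (by omega))
      (fun m i hi => by rw [hblock (2 * m) i hi, if_pos (by omega)])
      (hratio.comp h_even.tendsto_atTop) k)
    (hS.comp (h_odd.add_const 1)).tendsto_atTop
    (tendsto_holderMeans_birk_of_blocks ha_mem hc₂ (fun m => hS (by omega))
      (fun m i hi => by rw [hblock (2 * m + 1) i hi, if_neg (by omega)])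
      (hratio.comp h_odd.tendsto_atTop) k)
  exact ⟨(hmeans 0).1, (hmeans 0).2, hmeans⟩

/-- **Section 5.2** (modified Bowen example, discrete content).  Let `c₁ ≠ c₂` and
let `(T_j)_{j ≥ 1}` be positive integers with `T_{j+1} / ∑_{i=1}^j T_i → ∞`.  Let
`a` be the sequence whose `j`-th consecutive block (of length `T_j`, occupying
positions `∑_{i<j} T_i ≤ n < ∑_{i≤j} T_i`) has constant value `c₁` for `j` odd and
`c₂` for `j` even.  Then `liminf B = min c₁ c₂`, `limsup B = max c₁ c₂`, and all
Hölder means have the same liminf and limsup (type B2). -/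
theorem modified_bowen_type_B2 (c₁ c₂ : ℝ) (hc : c₁ ≠ c₂)
    (T : ℕ → ℕ) (hTpos : ∀ j : ℕ, 1 ≤ j → 1 ≤ T j)
    (hgrow : Tendsto (fun j : ℕ => (T (j + 1) : ℝ) / ∑ i ∈ Finset.Icc 1 j, (T i : ℝ))
      atTop atTop)
    (a : ℕ → ℝ)
    (ha : ∀ j : ℕ, 1 ≤ j → ∀ n : ℕ,
      (∑ i ∈ Finset.Icc 1 (j - 1), T i) ≤ n → n < ∑ i ∈ Finset.Icc 1 j, T i →
      a n = if j % 2 = 1 then c₁ else c₂) :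
    liminf (birk a) atTop = min c₁ c₂ ∧ limsup (birk a) atTop = max c₁ c₂ ∧
    ∀ k : ℕ, liminf (fun n : ℕ => holderMeans (birk a) k n) atTop = min c₁ c₂ ∧
      limsup (fun n : ℕ => holderMeans (birk a) k n) atTop = max c₁ c₂ :=
  modified_bowen_type_B2_general c₁ c₂ T hTpos hgrow a ha
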